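/- Uniqueness of matrix factorization up to a constant matrix: suppose E(p,c) = P(p)·C(c) = P'(p)·C'(c) are two factorizations of a smooth map E from U × V (U ⊆ ℝᵐ, V ⊆ ℝᵏ open and connected) to invertible n×n real matrices, where P, P' : U → GL(n,ℝ) and C, C' : V → GL(n,ℝ). Then there exists a constant invertible matrix K with P'(p) = P(p)·K for all p and C'(c) = K⁻¹·C(c) for all c. -/
import Mathlib


open Matrix

/-- Uniqueness of the factorization E(p,c) = P(p)·C(c) up to a constant
invertible matrix K. -/
theorem factorization_unique_up_to_constant {m k n : ℕ}
    (U : Set (Fin m → ℝ)) (V : Set (Fin k → ℝ))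
    (hUo : IsOpen U) (hVo : IsOpen V) (hUc : IsConnected U) (hVc : IsConnected V)
    (P P' : (Fin m → ℝ) → Matrix (Fin n) (Fin n) ℝ)
    (C C' : (Fin k → ℝ) → Matrix (Fin n) (Fin n) ℝ)
    (hP : ∀ p ∈ U, IsUnit (P p)) (hP' : ∀ p ∈ U, IsUnit (P' p))
    (hC : ∀ c ∈ V, IsUnit (C c)) (hC' : ∀ c ∈ V, IsUnit (C' c))
    (hPcont : ContinuousOn P U) (hP'cont : ContinuousOn P' U)
    (hCcont : ContinuousOn C V) (hC'cont : ContinuousOn C' V)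
    (hfact : ∀ p ∈ U, ∀ c ∈ V, P p * C c = P' p * C' c) :
    ∃ K : Matrix (Fin n) (Fin n) ℝ, IsUnit K ∧
      (∀ p ∈ U, P' p = P p * K) ∧ (∀ c ∈ V, C' c = K⁻¹ * C c) := by
  obtain ⟨p₀, hp₀⟩ := hUc.nonempty
  obtain ⟨c₀, hc₀⟩ := hVc.nonempty
  have hP0 := hP p₀ hp₀
  have hP'0 := hP' p₀ hp₀
  have dP0 : IsUnit (P p₀).det := (Matrix.isUnit_iff_isUnit_det _).mp hP0
  have dP'0 : IsUnit (P' p₀).det := (Matrix.isUnit_iff_isUnit_det _).mp hP'0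
  refine ⟨(P p₀)⁻¹ * P' p₀, ?_, ?_, ?_⟩
  · exact ((Matrix.isUnit_nonsing_inv_iff.mpr hP0)).mul hP'0
  · intro p hp
    have h1 := hfact p hp c₀ hc₀
    have h0 := hfact p₀ hp₀ c₀ hc₀
    have hC0 := hC c₀ hc₀
    have hC'0 := hC' c₀ hc₀
    have dC0 : IsUnit (C c₀).det := (Matrix.isUnit_iff_isUnit_det _).mp hC0
    have dC'0 : IsUnit (C' c₀).det := (Matrix.isUnit_iff_isUnit_det _).mp hC'0
    -- C' c₀ = (P' p₀)⁻¹ * P p₀ * C c₀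
    have hCc : C' c₀ = (P' p₀)⁻¹ * (P p₀ * C c₀) := by
      rw [h0, ← Matrix.mul_assoc, Matrix.nonsing_inv_mul _ dP'0, Matrix.one_mul]
    calc P' p = P' p * C' c₀ * (C' c₀)⁻¹ := by
              rw [Matrix.mul_assoc, Matrix.mul_nonsing_inv _ dC'0, Matrix.mul_one]
      _ = P p * C c₀ * (C' c₀)⁻¹ := by rw [h1]
      _ = P p * ((P p₀)⁻¹ * P' p₀) := by
              rw [hCc, Matrix.mul_inv_rev, Matrix.mul_inv_rev,
                Matrix.nonsing_inv_nonsing_inv _ dP'0]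
              simp only [Matrix.mul_assoc]
              rw [← Matrix.mul_assoc (C c₀), Matrix.mul_nonsing_inv _ dC0, Matrix.one_mul]
  · intro c hc
    have h0 := hfact p₀ hp₀ c hc
    rw [Matrix.mul_inv_rev, Matrix.nonsing_inv_nonsing_inv _ dP0]
    calc C' c = (P' p₀)⁻¹ * (P' p₀ * C' c) := by
              rw [← Matrix.mul_assoc, Matrix.nonsing_inv_mul _ dP'0, Matrix.one_mul]
      _ = (P' p₀)⁻¹ * (P p₀ * C c) := by rw [h0]
      _ = (P' p₀)⁻¹ * P p₀ * C c := by rw [Matrix.mul_assoc]
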